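/- In the hyperbolic plane, let g(t) be a family of geodesics all passing through a fixed point M, obtained by rotating a fixed geodesic g(0) by angle ρ(t) about M, with ρ differentiable. Let l be a fixed geodesic intersecting every g(t) transversally at a point p(t), at distance D(t) = d(M, p(t)) from M along g(t) and at angle θ_l(t) between g(t) and l. If f_l(t) denotes the signed arclength position of p(t) on l, then f_l'(t) = ρ'(t)·sinh(D(t))/sin(θ_l(t)). -/

import Mathlib

/-!
In the right triangle with legs `u` (the perpendicular from `M` to `l`) and `f`, hypotenuse `D`
and angles `ρ` at `M` and `θ` at `p`, the relations `cosh D = cosh u cosh f`,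
`sin ρ = sinh f / sinh D`, `sin θ = sinh u / sinh D` give `cos ρ = cosh f sin θ` and hence
`sinh u · tan ρ = tanh f`. Differentiating this identity in `t`,
`f' / cosh² f = sinh u · ρ' / cos² ρ = sinh D sin θ · ρ' / (cosh² f sin² θ)`.
-/

open Real Filter Topology

theorem Real.hasDerivAt_tanh (x : ℝ) : HasDerivAt tanh (1 / cosh x ^ 2) x := by
  have h := (hasDerivAt_sinh x).div (hasDerivAt_cosh x) (cosh_pos x).ne'
  rw [← sq, ← sq, cosh_sq_sub_sinh_sq] at h
  exact h.congr_of_eventuallyEq (.of_forall tanh_eq_sinh_div_cosh)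

theorem div_cosh_sq_eq_of_mul_tan_eventuallyEq_tanh {c : ℝ} {f ρ : ℝ → ℝ} {t₀ f' ρ' : ℝ}
    (h : (fun t => c * tan (ρ t)) =ᶠ[𝓝 t₀] fun t => tanh (f t)) (hcos : cos (ρ t₀) ≠ 0)
    (hf : HasDerivAt f f' t₀) (hρ : HasDerivAt ρ ρ' t₀) :
    f' / cosh (f t₀) ^ 2 = c * ρ' / cos (ρ t₀) ^ 2 := by
  have htan := ((hasDerivAt_tan hcos).comp t₀ hρ).const_mul c
  have htanh := (hasDerivAt_tanh (f t₀)).comp t₀ hf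
  have := (htan.congr_of_eventuallyEq h.symm).unique htanh
  field_simp at this ⊢
  linear_combination -this

section RightTriangle

variable {u f D ρ θ : ℝ}

theorem sinh_ne_zero_of_sin_eq_div (hθ : sin θ = sinh u / sinh D) (hθsin : 0 < sin θ) :
    sinh D ≠ 0 := by
  rintro h
  simp [h] at hθ
  linarith

theorem cos_eq_cosh_mul_sin_of_right_triangle
    (hD : cosh D = cosh u * cosh f) (hρ : sin ρ = sinh f / sinh D)
    (hθ : sin θ = sinh u / sinh D) (hρcos : 0 < cos ρ) (hθsin : 0 < sin θ) :
    cos ρ = cosh f * sin θ := by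
  have hsD := sinh_ne_zero_of_sin_eq_div hθ hθsin
  have hsq : cos ρ ^ 2 = (cosh f * sin θ) ^ 2 := by
    rw [cos_sq', hρ, hθ]
    field_simp
    linear_combination
      (cosh D + cosh u * cosh f) * hD - cosh f ^ 2 * sinh_sq u + sinh_sq D - sinh_sq f
  exact (pow_left_inj₀ hρcos.le (by positivity) two_ne_zero).1 hsq

theorem sinh_mul_tan_eq_tanh_of_right_triangle
    (hD : cosh D = cosh u * cosh f) (hρ : sin ρ = sinh f / sinh D)
    (hθ : sin θ = sinh u / sinh D) (hρcos : 0 < cos ρ) (hθsin : 0 < sin θ) :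
    sinh u * tan ρ = tanh f := by
  have hsD := sinh_ne_zero_of_sin_eq_div hθ hθsin
  rw [tan_eq_sin_div_cos, cos_eq_cosh_mul_sin_of_right_triangle hD hρ hθ hρcos hθsin, hρ,
    (div_eq_iff hsD).1 (hθ.symm), tanh_eq_sinh_div_cosh]
  field_simp

end RightTriangle

theorem stmt18_general (u : ℝ)
    (f ρ D θ : ℝ → ℝ) (t₀ f' ρ' : ℝ)
    (hD : ∀ t, Real.cosh (D t) = Real.cosh u * Real.cosh (f t))
    (hρ : ∀ t, Real.sin (ρ t) = Real.sinh (f t) / Real.sinh (D t))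
    (hρrange : ∀ t, |ρ t| < π / 2)
    (hθ : ∀ t, Real.sin (θ t) = Real.sinh u / Real.sinh (D t))
    (hθrange : ∀ t, 0 < θ t ∧ θ t < π)
    (hf' : HasDerivAt f f' t₀)
    (hρ' : HasDerivAt ρ ρ' t₀) :
    f' = ρ' * Real.sinh (D t₀) / Real.sin (θ t₀) := by
  have hcos t : 0 < cos (ρ t) := cos_pos_of_mem_Ioo (abs_lt.1 (hρrange t))
  have hsin t : 0 < sin (θ t) := sin_pos_of_pos_of_lt_pi (hθrange t).1 (hθrange t).2
  have hderiv := div_cosh_sq_eq_of_mul_tan_eventuallyEq_tanh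
    (.of_forall fun t ↦
      sinh_mul_tan_eq_tanh_of_right_triangle (hD t) (hρ t) (hθ t) (hcos t) (hsin t))
    (hcos t₀).ne' hf' hρ'
  rw [cos_eq_cosh_mul_sin_of_right_triangle (hD t₀) (hρ t₀) (hθ t₀) (hcos t₀) (hsin t₀),
    (div_eq_iff (sinh_ne_zero_of_sin_eq_div (hθ t₀) (hsin t₀))).1 (hθ t₀).symm] at hderiv
  have hsin₀ := hsin t₀
  field_simp at hderiv ⊢
  linear_combination hderiv

/-- Variation of the intersection point of a rotating geodesic pencil with a fixed
geodesic in the hyperbolic plane.  The pencil of geodesics g(t) through the fixed point M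
is parametrized by the rotation angle ρ(t); the fixed geodesic l is at distance u > 0
from M, and f(t) is the signed arclength position on l (measured from the foot of the
perpendicular from M) of the intersection point p(t) = g(t) ∩ l, at distance
D(t) = d(M, p(t)) from M and angle θ(t) between g(t) and l.  The hyperbolic right-triangle
relations cosh D = cosh u · cosh f, sin ρ = sinh f / sinh D and sin θ = sinh u / sinh D
encode this configuration.  Then f'(t) = ρ'(t) · sinh(D(t)) / sin(θ(t)). -/
theorem stmt18 (u : ℝ) (hu : 0 < u)
    (f ρ D θ : ℝ → ℝ) (t₀ f' ρ' : ℝ)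
    (hD : ∀ t, Real.cosh (D t) = Real.cosh u * Real.cosh (f t))
    (hρ : ∀ t, Real.sin (ρ t) = Real.sinh (f t) / Real.sinh (D t))
    (hρrange : ∀ t, |ρ t| < π / 2)
    (hθ : ∀ t, Real.sin (θ t) = Real.sinh u / Real.sinh (D t))
    (hθrange : ∀ t, 0 < θ t ∧ θ t < π)
    (hf' : HasDerivAt f f' t₀)
    (hρ' : HasDerivAt ρ ρ' t₀) :
    f' = ρ' * Real.sinh (D t₀) / Real.sin (θ t₀) :=
  stmt18_general u f ρ D θ t₀ f' ρ' hD hρ hρrange hθ hθrange hf' hρ'
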